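/- Assume the system F_i(x) = y^i has a solution in B_{ρ/2}(x_0), let x† be the unique solution of the system with minimal distance to x_0, and assume the null-space condition N(F_i'(x†)) ⊆ N(F_i'(x)) for all x ∈ B_ρ(x_0) and all i = 0,…,N−1 (here N denotes the kernel of a continuous linear operator). Then the lLK iterates with exact data (y^{δ,i} = y^i, δ^i = 0) converge to x†. -/

import Mathlib

/-!
With exact data the loping weight only skips steps that would not move the iterate, so the
method is the plain Landweber–Kaczmarz iteration. The tangential cone condition with `η < 1/2`
makes every step Fejér monotone towards each solution `x†` in the ball,
`‖x_{n+1} - x†‖² + (1 - 2η) ‖r_n‖² ≤ ‖x_n - x†‖²`, which keeps the iterates in `B_ρ(x₀)` and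
makes the residuals square-summable. The iterates at the starts of the sweeps through all `N`
equations form a Cauchy sequence by the argument of Hanke, Neubauer and Scherzer: compared with
the sweep of smallest residual, their distances are controlled by the decrease of `‖x_n - x†‖²`
and by tails of the residual series. The limit `x̄` solves all equations. Every step lies in the
range of some `F_i'(x_n)^*`, which is orthogonal to `x† - x̄` by the null-space condition; hence
`x̄ - x₀ ⊥ x† - x̄`, and the minimality of `‖x† - x₀‖` forces `x̄ = x†`.
-/

open Metric Filter Fin.NatCast

open scoped RealInnerProductSpace Topology

section InnerProduct

variable {X : Type*} [NormedAddCommGroup X] [InnerProductSpace ℝ X]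

theorem norm_sub_sq_eq_sub_add_two_inner (v w : X) :
    ‖v - w‖ ^ 2 = ‖v‖ ^ 2 - ‖w‖ ^ 2 + 2 * ⟪w - v, w⟫ := by
  rw [norm_sub_sq_real, inner_sub_left, real_inner_self_eq_norm_sq, real_inner_comm]
  ring

theorem eq_of_inner_sub_eq_zero_of_norm_sub_le {x₀ a b : X} (horth : ⟪a - x₀, b - a⟫ = 0)
    (hle : ‖b - x₀‖ ≤ ‖a - x₀‖) : a = b := by
  have hpyth := norm_add_sq_eq_norm_sq_add_norm_sq_real horth
  rw [sub_add_sub_cancel'] at hpyth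
  have : ‖b - a‖ = 0 :=
    le_antisymm (by nlinarith [norm_nonneg (b - x₀), norm_nonneg (a - x₀), norm_nonneg (b - a)])
      (norm_nonneg _)
  exact (sub_eq_zero.mp (norm_eq_zero.mp this)).symm

theorem abs_inner_sub_le_two_mul_sum {u : ℕ → X} {w : X} {R : ℕ → ℝ} {C : ℝ} {k p q : ℕ}
    (hC : 0 ≤ C) (hinner : ∀ j, |⟪u j - u (j + 1), w⟫| ≤ C * (R j + R k)) (hpq : p ≤ q)
    (hk : ∀ j ∈ Finset.Ico p q, R k ≤ R j) :
    |⟪u p - u q, w⟫| ≤ 2 * C * ∑ j ∈ Finset.Ico p q, R j := by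
  have htel : u p - u q = ∑ j ∈ Finset.Ico p q, (u j - u (j + 1)) := by
    rw [← neg_sub, ← Finset.sum_Ico_sub u hpq, ← Finset.sum_neg_distrib]
    simp only [neg_sub]
  rw [htel, sum_inner, Finset.mul_sum]
  refine (Finset.abs_sum_le_sum_abs _ _).trans (Finset.sum_le_sum fun j hj => ?_)
  nlinarith [hinner j, mul_le_mul_of_nonneg_left (hk j hj) hC]

theorem norm_sub_sq_le_of_forall_le {u : ℕ → X} {x : X} {R : ℕ → ℝ} {C : ℝ} {a k : ℕ}
    (hC : 0 ≤ C) (hinner : ∀ j, |⟪u j - u (j + 1), u k - x⟫| ≤ C * (R j + R k))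
    (hk : ∀ j ∈ Finset.Ico (min a k) (max a k), R k ≤ R j) :
    ‖u a - u k‖ ^ 2 ≤
      ‖u a - x‖ ^ 2 - ‖u k - x‖ ^ 2 + 4 * C * ∑ j ∈ Finset.Ico (min a k) (max a k), R j := by
  have hexp := norm_sub_sq_eq_sub_add_two_inner (u a - x) (u k - x)
  rw [sub_sub_sub_cancel_right, sub_sub_sub_cancel_right] at hexp
  have hsum : |⟪u k - u a, u k - x⟫| ≤ 2 * C * ∑ j ∈ Finset.Ico (min a k) (max a k), R j := by
    rcases le_total a k with hak | hka
    · rw [min_eq_left hak, max_eq_right hak] at hk ⊢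
      rw [← neg_sub, inner_neg_left, abs_neg]
      exact abs_inner_sub_le_two_mul_sum hC hinner hak hk
    · rw [min_eq_right hka, max_eq_left hka] at hk ⊢
      exact abs_inner_sub_le_two_mul_sum hC hinner hka hk
  linarith [(abs_le.mp hsum).2]

/-- A Cauchy criterion of Hanke–Neubauer–Scherzer type: compare `u n` and `u m` with `u k`,
where `k` minimizes `R` between `n` and `m`. -/
theorem cauchySeq_of_abs_inner_le {u : ℕ → X} {x : X} {R : ℕ → ℝ} {C : ℝ}
    (hu : Antitone fun q => ‖u q - x‖) (hR0 : ∀ q, 0 ≤ R q) (hR : Summable R) (hC : 0 ≤ C)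
    (hinner : ∀ q k, |⟪u q - u (q + 1), u k - x⟫| ≤ C * (R q + R k)) : CauchySeq u := by
  set e : ℕ → ℝ := fun q => ‖u q - x‖ ^ 2
  have he : Antitone e := fun a b hab => pow_le_pow_left₀ (norm_nonneg _) (hu hab) 2
  obtain ⟨L, hL⟩ : ∃ L, Tendsto e atTop (𝓝 L) :=
    ⟨_, tendsto_atTop_ciInf he ⟨0, by rintro _ ⟨q, rfl⟩; positivity⟩⟩
  set tail : ℕ → ℝ := fun M => ∑' i, R (i + M)
  have htail : ∀ M p q, M ≤ p → ∑ j ∈ Finset.Ico p q, R j ≤ tail M := fun M p q hMp =>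
    calc ∑ j ∈ Finset.Ico p q, R j ≤ ∑ j ∈ Finset.Ico M q, R j :=
          Finset.sum_le_sum_of_subset_of_nonneg (Finset.Ico_subset_Ico_left hMp)
            fun j _ _ => hR0 j
      _ = ∑ i ∈ Finset.range (q - M), R (i + M) := by
          rw [Finset.sum_Ico_eq_sum_range]; simp only [add_comm]
      _ ≤ tail M := ((summable_nat_add_iff M).mpr hR).sum_le_tsum _ fun i _ => hR0 _
  set b : ℕ → ℝ := fun M => e M - L + 4 * C * tail M
  refine cauchySeq_of_le_tendsto_0 (fun M => 2 * √(b M)) (fun n m M hn hm => ?_) ?_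
  · obtain ⟨k, hk, hkmin⟩ := (Finset.Icc (min n m) (max n m)).exists_min_image R
      ⟨n, Finset.mem_Icc.mpr ⟨min_le_left _ _, le_max_left _ _⟩⟩
    rw [Finset.mem_Icc] at hk
    have near : ∀ a, min n m ≤ a → a ≤ max n m → ‖u a - u k‖ ≤ √(b M) := fun a ha ha' => by
      refine Real.le_sqrt_of_sq_le ((norm_sub_sq_le_of_forall_le hC (fun j => hinner j k)
        fun j hj => hkmin j ?_).trans ?_)
      · simp only [Finset.mem_Ico, Finset.mem_Icc] at hj ⊢; omega
      · have := he (show M ≤ a by omega)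
        have := he.le_of_tendsto hL k
        have := mul_le_mul_of_nonneg_left (htail M (min a k) (max a k) (by omega))
          (by positivity : 0 ≤ 4 * C)
        simp only [e, b] at *
        linarith
    rw [dist_eq_norm, two_mul]
    calc ‖u n - u m‖ ≤ ‖u n - u k‖ + ‖u m - u k‖ := by
          simpa only [norm_sub_rev (u k)] using norm_sub_le_norm_sub_add_norm_sub (u n) (u k) (u m)
      _ ≤ √(b M) + √(b M) := add_le_add (near n (min_le_left _ _) (le_max_left _ _))
          (near m (min_le_right _ _) (le_max_right _ _))
  · have hb : Tendsto b atTop (𝓝 0) := by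
      simpa using (hL.sub_const L).add ((tendsto_sum_nat_add R).const_mul (4 * C))
    simpa using (hb.sqrt.const_mul 2)

end InnerProduct

section TangentialCone

variable {X Y : Type*} [NormedAddCommGroup X] [NormedSpace ℝ X] [NormedAddCommGroup Y]
  [NormedSpace ℝ Y] {F : X → Y} {A : X →L[ℝ] Y} {z z' : X} {η : ℝ}

theorem norm_apply_sub_le_of_tangentialCone
    (hcone : ‖F z - F z' - A (z - z')‖ ≤ η * ‖F z - F z'‖) :
    ‖A (z - z')‖ ≤ (1 + η) * ‖F z - F z'‖ := by
  have := norm_sub_le (F z - F z') (F z - F z' - A (z - z'))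
  rw [sub_sub_cancel] at this
  linarith

theorem one_sub_mul_norm_sub_le_of_tangentialCone
    (hcone : ‖F z - F z' - A (z - z')‖ ≤ η * ‖F z - F z'‖) :
    (1 - η) * ‖F z - F z'‖ ≤ ‖A (z - z')‖ := by
  have := norm_sub_norm_le (F z - F z') (F z - F z' - A (z - z'))
  rw [sub_sub_cancel] at this
  linarith

theorem lipschitzOnWith_two_of_tangentialCone {F' : X → X →L[ℝ] Y} {s : Set X}
    (hη : η < 1 / 2) (hscal : ∀ z ∈ s, ‖F' z‖ ≤ 1)
    (hcone : ∀ z ∈ s, ∀ z' ∈ s, ‖F z - F z' - F' z (z - z')‖ ≤ η * ‖F z - F z'‖) :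
    LipschitzOnWith 2 F s := by
  refine LipschitzOnWith.of_dist_le_mul fun z hz z' hz' => ?_
  have hlow := one_sub_mul_norm_sub_le_of_tangentialCone (hcone z hz z' hz')
  have hup := (F' z).le_of_opNorm_le (hscal z hz) (z - z')
  rw [dist_eq_norm, dist_eq_norm]
  push_cast
  nlinarith [norm_nonneg (F z - F z'), norm_nonneg (z - z')]

end TangentialCone

section Landweber

variable {X Y : Type*} [NormedAddCommGroup X] [InnerProductSpace ℝ X] [CompleteSpace X]
  [NormedAddCommGroup Y] [InnerProductSpace ℝ Y] [CompleteSpace Y]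

open ContinuousLinearMap

theorem norm_adjoint_apply_le {A : X →L[ℝ] Y} (hA : ‖A‖ ≤ 1) (r : Y) : ‖adjoint A r‖ ≤ ‖r‖ := by
  simpa using (adjoint A).le_of_opNorm_le (c := 1) (by rwa [LinearIsometryEquiv.norm_map]) r

theorem norm_sub_adjoint_apply_sq_add_le {A : X →L[ℝ] Y} (hA : ‖A‖ ≤ 1) {e : X} {r : Y}
    {η : ℝ} (hcone : ‖r - A e‖ ≤ η * ‖r‖) :
    ‖e - adjoint A r‖ ^ 2 + (1 - 2 * η) * ‖r‖ ^ 2 ≤ ‖e‖ ^ 2 := by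
  have hinner : (1 - η) * ‖r‖ ^ 2 ≤ ⟪adjoint A r, e⟫ := by
    have hsplit : ⟪r, A e⟫ = ‖r‖ ^ 2 - ⟪r, r - A e⟫ := by
      rw [inner_sub_right, real_inner_self_eq_norm_sq]; ring
    have := real_inner_le_norm r (r - A e)
    rw [adjoint_inner_left, hsplit]
    nlinarith [norm_nonneg r]
  have := norm_adjoint_apply_le hA r
  rw [norm_sub_sq_real, real_inner_comm]
  nlinarith [norm_nonneg (adjoint A r)]

theorem dist_landweber_le {x : ℕ → X} {A : ℕ → X →L[ℝ] Y} {r : ℕ → Y} {xdag : X} {s : Set X}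
    {η : ℝ} (hη : η ≤ 1 / 2) (hx : ∀ n, x (n + 1) = x n - adjoint (A n) (r n))
    (hs : closedBall xdag (dist (x 0) xdag) ⊆ s) (hA : ∀ n, x n ∈ s → ‖A n‖ ≤ 1)
    (hcone : ∀ n, x n ∈ s → ‖r n - A n (x n - xdag)‖ ≤ η * ‖r n‖) (n : ℕ) :
    dist (x n) xdag ≤ dist (x 0) xdag := by
  induction n with
  | zero => rfl
  | succ n ih =>
    have hn : x n ∈ s := hs (mem_closedBall.mpr ih)
    have hdesc := norm_sub_adjoint_apply_sq_add_le (hA n hn) (hcone n hn)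
    rw [← sub_right_comm, ← hx] at hdesc
    have : ‖x (n + 1) - xdag‖ ^ 2 ≤ ‖x n - xdag‖ ^ 2 := by nlinarith [sq_nonneg ‖r n‖]
    rw [dist_eq_norm, dist_eq_norm] at *
    exact (pow_le_pow_iff_left₀ (norm_nonneg _) (norm_nonneg _) two_ne_zero).mp this |>.trans ih

theorem summable_of_add_le {a g : ℕ → ℝ} (ha : ∀ n, 0 ≤ a n) (hg : ∀ n, 0 ≤ g n)
    (h : ∀ n, a (n + 1) + g n ≤ a n) : Summable g := by
  refine summable_of_sum_range_le (c := a 0) hg fun m => ?_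
  have : ∀ m, a m + ∑ i ∈ Finset.range m, g i ≤ a 0 := by
    intro m
    induction m with
    | zero => simp
    | succ m ih => rw [Finset.sum_range_succ]; linarith [h m]
  linarith [this m, ha m]

end Landweber

namespace LandweberKaczmarz

section Residual

variable {X Y : Type*} [NormedAddCommGroup Y] {N : ℕ} [NeZero N]

def residual (F : Fin N → X → Y) (y : Fin N → Y) (xs : ℕ → X) (n : ℕ) : Y :=
  F (n : Fin N) (xs n) - y (n : Fin N)

def cycleResidual (F : Fin N → X → Y) (y : Fin N → Y) (xs : ℕ → X) (q : ℕ) : ℝ :=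
  ∑ j ∈ Finset.range N, ‖residual F y xs (q * N + j)‖

variable {F : Fin N → X → Y} {y : Fin N → Y} {xs : ℕ → X}

theorem natCast_mul_add_val (q : ℕ) (i : Fin N) : ((q * N + i : ℕ) : Fin N) = i := by
  ext
  rw [Fin.val_natCast, Nat.mul_add_mod', Nat.mod_eq_of_lt i.isLt]

theorem residual_mul_add_val (q : ℕ) (i : Fin N) :
    residual F y xs (q * N + i) = F i (xs (q * N + i)) - y i := by
  simp only [residual, natCast_mul_add_val]

theorem norm_residual_le_cycleResidual (q : ℕ) (i : Fin N) :
    ‖residual F y xs (q * N + i)‖ ≤ cycleResidual F y xs q :=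
  Finset.single_le_sum (f := fun j => ‖residual F y xs (q * N + j)‖)
    (fun _ _ => norm_nonneg _) (Finset.mem_range.mpr i.isLt)

theorem cycleResidual_nonneg (q : ℕ) : 0 ≤ cycleResidual F y xs q :=
  Finset.sum_nonneg fun _ _ => norm_nonneg _

theorem summable_cycleResidual_sq (h : Summable fun n => ‖residual F y xs n‖ ^ 2) :
    Summable fun q => cycleResidual F y xs q ^ 2 := by
  have hsweep : ∀ j, Summable fun q => ‖residual F y xs (q * N + j)‖ ^ 2 := fun j =>
    h.comp_injective fun a b hab => by simpa [NeZero.ne N] using hab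
  refine Summable.of_nonneg_of_le (fun q => sq_nonneg _) (fun q => ?_)
    ((summable_sum (s := Finset.range N) fun j _ => hsweep j).mul_left (N : ℝ))
  simpa [cycleResidual] using sq_sum_le_card_mul_sum_sq (s := Finset.range N)
    (f := fun j => ‖residual F y xs (q * N + j)‖)

end Residual

section NormedSpace

variable {X Y : Type*} [NormedAddCommGroup X] [NormedSpace ℝ X] [NormedAddCommGroup Y]
  [NormedSpace ℝ Y] {N : ℕ} [NeZero N] {F : Fin N → X → Y} {F' : Fin N → X → X →L[ℝ] Y}
  {y : Fin N → Y} {xs : ℕ → X} {s : Set X} {η : ℝ}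

theorem norm_residual_sub_apply_le
    (htcc : ∀ i, ∀ z ∈ s, ∀ z' ∈ s, ‖F i z - F i z' - F' i z (z - z')‖ ≤ η * ‖F i z - F i z'‖)
    {n : ℕ} (hn : xs n ∈ s) {xdag : X} (hdag : xdag ∈ s) (hsol : ∀ i, F i xdag = y i) :
    ‖residual F y xs n - F' (n : Fin N) (xs n) (xs n - xdag)‖ ≤ η * ‖residual F y xs n‖ := by
  have := htcc n _ hn _ hdag
  rwa [hsol] at this

theorem apply_eq_of_tendsto (hη : η < 1 / 2) (hmem : ∀ n, xs n ∈ s)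
    (hscal : ∀ i, ∀ z ∈ s, ‖F' i z‖ ≤ 1)
    (htcc : ∀ i, ∀ z ∈ s, ∀ z' ∈ s, ‖F i z - F i z' - F' i z (z - z')‖ ≤ η * ‖F i z - F i z'‖)
    {L : X} (hLs : L ∈ s) (hL : Tendsto xs atTop (𝓝 L))
    (hcyc : Tendsto (cycleResidual F y xs) atTop (𝓝 0)) (i : Fin N) : F i L = y i := by
  have hsweep : Tendsto (fun q => q * N + (i : ℕ)) atTop atTop :=
    tendsto_atTop_mono (fun q => (Nat.le_mul_of_pos_right q (NeZero.pos N)).trans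
      (Nat.le_add_right _ _)) tendsto_id
  have hF : Tendsto (fun q => F i (xs (q * N + i))) atTop (𝓝 (F i L)) :=
    ((lipschitzOnWith_two_of_tangentialCone hη (hscal i) (htcc i)).continuousOn L hLs).tendsto.comp
      (tendsto_nhdsWithin_iff.mpr ⟨hL.comp hsweep, Eventually.of_forall fun _ => hmem _⟩)
  have hres : Tendsto (fun q => F i (xs (q * N + i)) - y i) atTop (𝓝 0) :=
    squeeze_zero_norm (fun q => residual_mul_add_val (F := F) (y := y) (xs := xs) q i ▸
      norm_residual_le_cycleResidual q i) hcyc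
  exact sub_eq_zero.mp (tendsto_nhds_unique (hF.sub_const (y i)) hres)

end NormedSpace

variable {X Y : Type*} [NormedAddCommGroup X] [InnerProductSpace ℝ X] [CompleteSpace X]
  [NormedAddCommGroup Y] [InnerProductSpace ℝ Y] [CompleteSpace Y]
  {N : ℕ} [NeZero N] {F : Fin N → X → Y} {F' : Fin N → X → X →L[ℝ] Y} {y : Fin N → Y}
  {xs : ℕ → X} {s : Set X} {η : ℝ}

open ContinuousLinearMap

theorem iterate_succ_eq_of_loping {ω : ℕ → ℝ}
    (hω : ∀ n, ω n = if 0 < ‖F (n : Fin N) (xs n) - y (n : Fin N)‖ then 1 else 0)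
    (hxs : ∀ n, xs (n + 1) = xs n -
      ω n • adjoint (F' (n : Fin N) (xs n)) (F (n : Fin N) (xs n) - y (n : Fin N))) (n : ℕ) :
    xs (n + 1) = xs n - adjoint (F' (n : Fin N) (xs n)) (residual F y xs n) := by
  rw [hxs, hω, residual]
  split_ifs with h
  · rw [one_smul]
  · simp [norm_eq_zero.mp (le_antisymm (not_lt.mp h) (norm_nonneg _))]

theorem norm_sub_le_cycleResidual
    (hxs : ∀ n, xs (n + 1) = xs n - adjoint (F' (n : Fin N) (xs n)) (residual F y xs n))
    (hmem : ∀ n, xs n ∈ s) (hscal : ∀ i, ∀ z ∈ s, ‖F' i z‖ ≤ 1) {q j : ℕ} (hj : j ≤ N) :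
    ‖xs (q * N) - xs (q * N + j)‖ ≤ cycleResidual F y xs q := by
  rw [← dist_eq_norm]
  calc dist (xs (q * N)) (xs (q * N + j))
      ≤ ∑ n ∈ Finset.Ico (q * N) (q * N + j), dist (xs n) (xs (n + 1)) :=
        dist_le_Ico_sum_dist xs (Nat.le_add_right _ _)
    _ ≤ ∑ n ∈ Finset.Ico (q * N) (q * N + N), ‖residual F y xs n‖ := by
        refine Finset.sum_le_sum_of_subset_of_nonneg (Finset.Ico_subset_Ico_right (by omega))
          (fun _ _ _ => norm_nonneg _) |> le_trans' <| Finset.sum_le_sum fun n _ => ?_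
        rw [dist_eq_norm, hxs n, sub_sub_cancel]
        exact norm_adjoint_apply_le (hscal _ _ (hmem n)) _
    _ = cycleResidual F y xs q := by
        rw [Finset.sum_Ico_eq_sum_range, add_tsub_cancel_left, cycleResidual]

theorem norm_sub_le_three_mul_cycleResidual (hη : η < 1 / 2)
    (hxs : ∀ n, xs (n + 1) = xs n - adjoint (F' (n : Fin N) (xs n)) (residual F y xs n))
    (hmem : ∀ n, xs n ∈ s) (hscal : ∀ i, ∀ z ∈ s, ‖F' i z‖ ≤ 1)
    (htcc : ∀ i, ∀ z ∈ s, ∀ z' ∈ s, ‖F i z - F i z' - F' i z (z - z')‖ ≤ η * ‖F i z - F i z'‖)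
    (i : Fin N) (q : ℕ) :
    ‖F i (xs (q * N)) - y i‖ ≤ 3 * cycleResidual F y xs q := by
  have hlip := lipschitzOnWith_two_of_tangentialCone hη (hscal i) (htcc i)
  have hres := norm_residual_le_cycleResidual (F := F) (y := y) (xs := xs) q i
  rw [residual_mul_add_val] at hres
  have hstep := norm_sub_le_cycleResidual hxs hmem hscal (q := q) i.isLt.le
  calc ‖F i (xs (q * N)) - y i‖
      ≤ ‖F i (xs (q * N)) - F i (xs (q * N + i))‖ + ‖F i (xs (q * N + i)) - y i‖ :=
        norm_sub_le_norm_sub_add_norm_sub _ _ _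
    _ ≤ 2 * ‖xs (q * N) - xs (q * N + i)‖ + cycleResidual F y xs q :=
        add_le_add (hlip.norm_sub_le (hmem _) (hmem _)) hres
    _ ≤ 3 * cycleResidual F y xs q := by linarith

theorem abs_inner_step_le (hη : η < 1 / 2)
    (hxs : ∀ n, xs (n + 1) = xs n - adjoint (F' (n : Fin N) (xs n)) (residual F y xs n))
    (hmem : ∀ n, xs n ∈ s) (hscal : ∀ i, ∀ z ∈ s, ‖F' i z‖ ≤ 1)
    (htcc : ∀ i, ∀ z ∈ s, ∀ z' ∈ s, ‖F i z - F i z' - F' i z (z - z')‖ ≤ η * ‖F i z - F i z'‖)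
    {xdag : X} (hdag : xdag ∈ s) (hsol : ∀ i, F i xdag = y i) (n k : ℕ) :
    |⟪xs n - xs (n + 1), xs (k * N) - xdag⟫| ≤
      ‖residual F y xs n‖ * (3 * ‖residual F y xs n‖ + 5 * cycleResidual F y xs k) := by
  set i : Fin N := (n : Fin N)
  set A := F' i (xs n)
  set r := residual F y xs n
  have hr : r = F i (xs n) - F i xdag := by rw [hsol]; rfl
  have hcone_bd : ∀ z ∈ s, ‖A (xs n - z)‖ ≤ 3 / 2 * ‖F i (xs n) - F i z‖ := fun z hz => by
    have := norm_apply_sub_le_of_tangentialCone (htcc i _ (hmem n) _ hz)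
    nlinarith [norm_nonneg (F i (xs n) - F i z)]
  have hdag_bd : ‖A (xs n - xdag)‖ ≤ 3 / 2 * ‖r‖ := by
    rw [hr]; exact hcone_bd xdag hdag
  have hcyc_bd : ‖A (xs n - xs (k * N))‖ ≤ 3 / 2 * (‖r‖ + 3 * cycleResidual F y xs k) := by
    refine (hcone_bd _ (hmem _)).trans (mul_le_mul_of_nonneg_left ?_ (by norm_num))
    have := norm_sub_le_norm_sub_add_norm_sub (F i (xs n)) (y i) (F i (xs (k * N)))
    rw [norm_sub_rev (y i)] at this
    have := norm_sub_le_three_mul_cycleResidual hη hxs hmem hscal htcc i k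
    change _ ≤ ‖F i (xs n) - y i‖ + _
    linarith
  have hA_bd : ‖A (xs (k * N) - xdag)‖ ≤ 3 * ‖r‖ + 5 * cycleResidual F y xs k := by
    rw [← sub_sub_sub_cancel_left _ _ (xs n), map_sub]
    have := norm_sub_le (A (xs n - xdag)) (A (xs n - xs (k * N)))
    nlinarith [norm_nonneg r, cycleResidual_nonneg (F := F) (y := y) (xs := xs) k]
  rw [hxs n, sub_sub_cancel, adjoint_inner_left]
  exact (abs_real_inner_le_norm _ _).trans (mul_le_mul_of_nonneg_left hA_bd (norm_nonneg _))

theorem abs_inner_cycle_le (hη : η < 1 / 2)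
    (hxs : ∀ n, xs (n + 1) = xs n - adjoint (F' (n : Fin N) (xs n)) (residual F y xs n))
    (hmem : ∀ n, xs n ∈ s) (hscal : ∀ i, ∀ z ∈ s, ‖F' i z‖ ≤ 1)
    (htcc : ∀ i, ∀ z ∈ s, ∀ z' ∈ s, ‖F i z - F i z' - F' i z (z - z')‖ ≤ η * ‖F i z - F i z'‖)
    {xdag : X} (hdag : xdag ∈ s) (hsol : ∀ i, F i xdag = y i) (q k : ℕ) :
    |⟪xs (q * N) - xs ((q + 1) * N), xs (k * N) - xdag⟫| ≤
      6 * N * (cycleResidual F y xs q ^ 2 + cycleResidual F y xs k ^ 2) := by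
  have htel : xs (q * N) - xs ((q + 1) * N) =
      ∑ j ∈ Finset.range N, (xs (q * N + j) - xs (q * N + j + 1)) := by
    have := Finset.sum_range_sub' (fun j => xs (q * N + j)) N
    simp only [add_zero, ← add_assoc] at this
    rw [this, add_one_mul]
  rw [htel, sum_inner]
  refine (Finset.abs_sum_le_sum_abs _ _).trans ?_
  have hterm : ∀ j ∈ Finset.range N, |⟪xs (q * N + j) - xs (q * N + j + 1), xs (k * N) - xdag⟫|
      ≤ 6 * (cycleResidual F y xs q ^ 2 + cycleResidual F y xs k ^ 2) := by
    intro j hj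
    have hr : ‖residual F y xs (q * N + j)‖ ≤ cycleResidual F y xs q :=
      norm_residual_le_cycleResidual q ⟨j, Finset.mem_range.mp hj⟩
    have hr0 := norm_nonneg (residual F y xs (q * N + j))
    have hk0 := cycleResidual_nonneg (F := F) (y := y) (xs := xs) k
    refine (abs_inner_step_le hη hxs hmem hscal htcc hdag hsol (q * N + j) k).trans ?_
    nlinarith [mul_le_mul hr hr hr0 (hr0.trans hr), mul_le_mul_of_nonneg_right hr hk0,
      sq_nonneg (cycleResidual F y xs q - cycleResidual F y xs k)]
  refine (Finset.sum_le_sum hterm).trans_eq ?_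
  rw [Finset.sum_const, Finset.card_range, nsmul_eq_mul]
  ring

theorem tendsto_of_tendsto_comp_mul
    (hxs : ∀ n, xs (n + 1) = xs n - adjoint (F' (n : Fin N) (xs n)) (residual F y xs n))
    (hmem : ∀ n, xs n ∈ s) (hscal : ∀ i, ∀ z ∈ s, ‖F' i z‖ ≤ 1) {L : X}
    (hL : Tendsto (fun q => xs (q * N)) atTop (𝓝 L))
    (hcyc : Tendsto (cycleResidual F y xs) atTop (𝓝 0)) : Tendsto xs atTop (𝓝 L) := by
  have hdiv := Nat.tendsto_div_const_atTop (NeZero.ne N)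
  have hclose : ∀ n, ‖xs n - xs (n / N * N)‖ ≤ cycleResidual F y xs (n / N) := fun n => by
    have := norm_sub_le_cycleResidual hxs hmem hscal (q := n / N) (Nat.mod_lt n (NeZero.pos N)).le
    rwa [Nat.div_add_mod', norm_sub_rev] at this
  simpa using (hL.comp hdiv).add (squeeze_zero_norm hclose (hcyc.comp hdiv))

theorem exists_tendsto_solution (hη : η < 1 / 2)
    (hxs : ∀ n, xs (n + 1) = xs n - adjoint (F' (n : Fin N) (xs n)) (residual F y xs n))
    (hmem : ∀ n, xs n ∈ s) (hscal : ∀ i, ∀ z ∈ s, ‖F' i z‖ ≤ 1)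
    (htcc : ∀ i, ∀ z ∈ s, ∀ z' ∈ s, ‖F i z - F i z' - F' i z (z - z')‖ ≤ η * ‖F i z - F i z'‖)
    (hs : IsClosed s) {xdag : X} (hdag : xdag ∈ s) (hsol : ∀ i, F i xdag = y i) :
    ∃ L ∈ s, (∀ i, F i L = y i) ∧ Tendsto xs atTop (𝓝 L) := by
  have hdesc : ∀ n, ‖xs (n + 1) - xdag‖ ^ 2 + (1 - 2 * η) * ‖residual F y xs n‖ ^ 2 ≤
      ‖xs n - xdag‖ ^ 2 := fun n => by
    have := norm_sub_adjoint_apply_sq_add_le (hscal _ _ (hmem n))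
      (norm_residual_sub_apply_le htcc (hmem n) hdag hsol)
    rwa [← sub_right_comm, ← hxs] at this
  have hanti : Antitone fun n => ‖xs n - xdag‖ := antitone_nat_of_succ_le fun n =>
    (pow_le_pow_iff_left₀ (norm_nonneg _) (norm_nonneg _) two_ne_zero).mp
      (by nlinarith [hdesc n, sq_nonneg ‖residual F y xs n‖])
  have hsum : Summable fun n => ‖residual F y xs n‖ ^ 2 :=
    (summable_mul_left_iff (by linarith : 1 - 2 * η ≠ 0)).mp <|
      summable_of_add_le (a := fun n => ‖xs n - xdag‖ ^ 2) (fun _ => sq_nonneg _)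
        (fun _ => mul_nonneg (by linarith) (sq_nonneg _)) hdesc
  have hcyc2 := summable_cycleResidual_sq hsum
  have hcyc : Tendsto (cycleResidual F y xs) atTop (𝓝 0) := by
    simpa [Real.sqrt_sq (cycleResidual_nonneg _)] using hcyc2.tendsto_atTop_zero.sqrt
  have hcauchy : CauchySeq fun q => xs (q * N) :=
    cauchySeq_of_abs_inner_le (hanti.comp_monotone fun _ _ h => Nat.mul_le_mul_right N h)
      (fun _ => sq_nonneg _) hcyc2 (by positivity)
      (abs_inner_cycle_le hη hxs hmem hscal htcc hdag hsol)
  obtain ⟨L, hL⟩ := cauchySeq_tendsto_of_complete hcauchy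
  have hL' := tendsto_of_tendsto_comp_mul hxs hmem hscal hL hcyc
  have hLs := hs.mem_of_tendsto hL' (Eventually.of_forall hmem)
  exact ⟨L, hLs, apply_eq_of_tendsto hη hmem hscal htcc hLs hL' hcyc, hL'⟩

theorem inner_sub_eq_zero_of_tendsto
    (hxs : ∀ n, xs (n + 1) = xs n - adjoint (F' (n : Fin N) (xs n)) (residual F y xs n))
    {v : X} (hv : ∀ n : ℕ, F' (n : Fin N) (xs n) v = 0) {L : X} (hL : Tendsto xs atTop (𝓝 L)) :
    ⟪L - xs 0, v⟫ = 0 := by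
  have horth : ∀ n, ⟪xs n - xs 0, v⟫ = 0 := fun n => by
    induction n with
    | zero => rw [sub_self, inner_zero_left]
    | succ n ih =>
      rw [hxs, sub_right_comm, inner_sub_left, ih, adjoint_inner_left, hv, inner_zero_right,
        sub_zero]
  exact tendsto_nhds_unique ((hL.sub_const _).inner tendsto_const_nhds)
    (tendsto_const_nhds.congr fun n => (horth n).symm)

end LandweberKaczmarz

open LandweberKaczmarz

theorem loping_landweber_kaczmarz_exact_data_convergence_minimal_distance_general
    {X Y : Type*} [NormedAddCommGroup X] [InnerProductSpace ℝ X] [CompleteSpace X]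
    [NormedAddCommGroup Y] [InnerProductSpace ℝ Y] [CompleteSpace Y]
    {N : ℕ} [NeZero N]
    (F : Fin N → X → Y) (F' : Fin N → X → X →L[ℝ] Y)
    (x₀ : X) (ρ : ℝ)
    (hscal : ∀ i, ∀ z ∈ closedBall x₀ ρ, ‖F' i z‖ ≤ 1)
    (η : ℝ) (hη : η < 1 / 2)
    (htcc : ∀ i, ∀ z ∈ closedBall x₀ ρ, ∀ z' ∈ closedBall x₀ ρ,
      ‖F i z - F i z' - F' i z (z - z')‖ ≤ η * ‖F i z - F i z'‖)
    (y : Fin N → Y)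
    (hex : ∃ z ∈ closedBall x₀ (ρ / 2), ∀ i, F i z = y i)
    (xs : ℕ → X) (hxs0 : xs 0 = x₀)
    (ω : ℕ → ℝ)
    (hω : ∀ n, ω n = if 0 < ‖F (n : Fin N) (xs n) - y (n : Fin N)‖ then 1 else 0)
    (hxs : ∀ n, xs (n + 1) = xs n -
      ω n • (ContinuousLinearMap.adjoint (F' (n : Fin N) (xs n)))
        (F (n : Fin N) (xs n) - y (n : Fin N)))
    (xdag : X) (hdagsol : ∀ i, F i xdag = y i)
    (hdagmin : ∀ z ∈ closedBall x₀ ρ, (∀ i, F i z = y i) → ‖xdag - x₀‖ ≤ ‖z - x₀‖)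
    (hkern : ∀ i, ∀ z ∈ closedBall x₀ ρ,
      LinearMap.ker (F' i xdag : X →ₗ[ℝ] Y) ≤ LinearMap.ker (F' i z : X →ₗ[ℝ] Y)) :
    Tendsto xs atTop (nhds xdag) := by
  obtain ⟨z, hz, hzsol⟩ := hex
  have hdag : dist xdag x₀ ≤ ρ / 2 := by
    have hρ : 0 ≤ ρ := by linarith [dist_nonneg (x := z) (y := x₀), mem_closedBall.mp hz]
    rw [dist_eq_norm]
    exact (hdagmin z (closedBall_subset_closedBall (by linarith) hz) hzsol).trans
      (mem_closedBall_iff_norm.mp hz)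
  have hball : closedBall xdag (dist (xs 0) xdag) ⊆ closedBall x₀ ρ :=
    closedBall_subset_closedBall' (by rw [hxs0, dist_comm]; linarith)
  have hdagmem : xdag ∈ closedBall x₀ ρ := hball (mem_closedBall_self dist_nonneg)
  have hstep := iterate_succ_eq_of_loping hω hxs
  have hmem : ∀ n, xs n ∈ closedBall x₀ ρ := fun n => hball <| mem_closedBall.mpr <|
    dist_landweber_le hη.le hstep hball (fun n hn => hscal _ _ hn)
      (fun n hn => norm_residual_sub_apply_le htcc hn hdagmem hdagsol) n
  obtain ⟨L, hLmem, hLsol, hL⟩ :=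
    exists_tendsto_solution hη hstep hmem hscal htcc isClosed_closedBall hdagmem hdagsol
  have hker : ∀ n : ℕ, F' (n : Fin N) (xs n) (xdag - L) = 0 := fun n =>
    hkern _ _ (hmem n) <| norm_le_zero_iff.mp <| by
      simpa [hdagsol, hLsol] using norm_apply_sub_le_of_tangentialCone (htcc n _ hdagmem _ hLmem)
  have horth := inner_sub_eq_zero_of_tendsto hstep hker hL
  rw [hxs0] at horth
  rwa [eq_of_inner_sub_eq_zero_of_norm_sub_le horth (hdagmin L hLmem hLsol)] at hL

/-- **Convergence of the loping Landweber–Kaczmarz method for exact data to the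
minimal-distance solution under the null-space condition.** -/
theorem loping_landweber_kaczmarz_exact_data_convergence_minimal_distance
    {X Y : Type*} [NormedAddCommGroup X] [InnerProductSpace ℝ X] [CompleteSpace X]
    [NormedAddCommGroup Y] [InnerProductSpace ℝ Y] [CompleteSpace Y]
    {N : ℕ} [NeZero N]
    (F : Fin N → X → Y) (F' : Fin N → X → X →L[ℝ] Y)
    (x₀ : X) (ρ : ℝ) (hρ : 0 < ρ)
    (hdiff : ∀ i, ∀ z ∈ closedBall x₀ ρ, HasFDerivAt (F i) (F' i z) z)
    (hscal : ∀ i, ∀ z ∈ closedBall x₀ ρ, ‖F' i z‖ ≤ 1)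
    (η : ℝ) (hη : η < 1 / 2)
    (htcc : ∀ i, ∀ z ∈ closedBall x₀ ρ, ∀ z' ∈ closedBall x₀ ρ,
      ‖F i z - F i z' - F' i z (z - z')‖ ≤ η * ‖F i z - F i z'‖)
    (y : Fin N → Y)
    (hex : ∃ z ∈ closedBall x₀ (ρ / 2), ∀ i, F i z = y i)
    (xs : ℕ → X) (hxs0 : xs 0 = x₀)
    (ω : ℕ → ℝ)
    (hω : ∀ n, ω n = if 0 < ‖F (n : Fin N) (xs n) - y (n : Fin N)‖ then 1 else 0)
    (hxs : ∀ n, xs (n + 1) = xs n -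
      ω n • (ContinuousLinearMap.adjoint (F' (n : Fin N) (xs n)))
        (F (n : Fin N) (xs n) - y (n : Fin N)))
    (xdag : X) (hdagsol : ∀ i, F i xdag = y i)
    (hdagmin : ∀ z ∈ closedBall x₀ ρ, (∀ i, F i z = y i) → ‖xdag - x₀‖ ≤ ‖z - x₀‖)
    (hdaguniq : ∀ z ∈ closedBall x₀ ρ, (∀ i, F i z = y i) →
      ‖z - x₀‖ = ‖xdag - x₀‖ → z = xdag)
    (hkern : ∀ i, ∀ z ∈ closedBall x₀ ρ,
      LinearMap.ker (F' i xdag : X →ₗ[ℝ] Y) ≤ LinearMap.ker (F' i z : X →ₗ[ℝ] Y)) :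
    Tendsto xs atTop (nhds xdag) :=
  loping_landweber_kaczmarz_exact_data_convergence_minimal_distance_general F F' x₀ ρ hscal η hη
    htcc y hex xs hxs0 ω hω hxs xdag hdagsol hdagmin hkern
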